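/- arXiv:1704.06928 — 10 statements merged into one kernel-verified Lean document; each statement's English description precedes it below -/
import Mathlib

section
/- Let intervals [a_{i,1}, a_{i,2}] (1 ≤ i ≤ n) of positive integers and a target T be given. The optimal value of the interval subset sum problem max { Σᵢ xᵢ : Σᵢ xᵢ ≤ T, xᵢ ∈ {0} ∪ [a_{i,1}, a_{i,2}], xᵢ ∈ ℤ } equals the optimal value of the 0-1 problem max { min(Σᵢ a_{i,2} yᵢ, T) : Σᵢ a_{i,1} yᵢ ≤ T, yᵢ ∈ {0,1} }. -/
private lemma issp_exists (n : ℕ) (a1 a2 : Fin n → ℤ) (T : ℤ)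
    (hle : ∀ i, a1 i ≤ a2 i)
    (y : Fin n → ℤ) (hy : ∀ i, y i = 0 ∨ y i = 1)
    (hfeas : (∑ i, a1 i * y i) ≤ T) :
    ∃ x : Fin n → ℤ,
      (∀ i, x i = 0 ∨ (a1 i ≤ x i ∧ x i ≤ a2 i)) ∧
      (∑ i, x i) ≤ T ∧ (∑ i, x i) = min (∑ i, a2 i * y i) T := by
  by_cases hcase : (∑ i, a2 i * y i) ≤ T
  · refine ⟨fun i => a2 i * y i, ?_, hcase, ?_⟩
    · intro i
      rcases hy i with h | h
      · left; simp [h]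
      · right; simp only [h, mul_one]; exact ⟨hle i, le_refl _⟩
    · rw [min_eq_left hcase]
  · push_neg at hcase
    set f : ℕ → ℤ :=
      fun k => ∑ i : Fin n, (if (i : ℕ) < k then a2 i else a1 i) * y i with hf
    have hf0 : f 0 = ∑ i : Fin n, a1 i * y i := by simp [hf]
    have hfn : f n = ∑ i : Fin n, a2 i * y i := by
      apply Finset.sum_congr rfl
      intro i _
      rw [if_pos i.isLt]
    have hstep : ∀ k (hk : k < n),
        f (k + 1) = f k + (a2 ⟨k, hk⟩ - a1 ⟨k, hk⟩) * y ⟨k, hk⟩ := by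
      intro k hk
      have key : ∀ i : Fin n, (if (i : ℕ) < k + 1 then a2 i else a1 i) * y i
          = (if (i : ℕ) < k then a2 i else a1 i) * y i
            + (if i = ⟨k, hk⟩ then (a2 i - a1 i) * y i else 0) := by
        intro i
        by_cases h : i = (⟨k, hk⟩ : Fin n)
        · subst h
          rw [if_pos rfl]
          simp only [Fin.val_mk]
          rw [if_pos (Nat.lt_succ_self k), if_neg (Nat.lt_irrefl k)]
          ring
        · have h' : (i : ℕ) ≠ k := fun hh => h (Fin.ext hh)
          rw [if_neg h, add_zero]
          congr 1
          exact if_congr (by omega) rfl rfl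
      calc f (k + 1) = ∑ i : Fin n, ((if (i : ℕ) < k then a2 i else a1 i) * y i
            + (if i = ⟨k, hk⟩ then (a2 i - a1 i) * y i else 0)) :=
              Finset.sum_congr rfl (fun i _ => key i)
        _ = f k + (a2 ⟨k, hk⟩ - a1 ⟨k, hk⟩) * y ⟨k, hk⟩ := by
              rw [Finset.sum_add_distrib, Finset.sum_ite_eq' Finset.univ]
              simp [hf]
    have hPn : T < f n := by rw [hfn]; exact hcase
    have hex : ∃ k, T < f k := ⟨n, hPn⟩
    have hmspec : T < f (Nat.find hex) := Nat.find_spec hex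
    have hmn : Nat.find hex ≤ n := Nat.find_le hPn
    have hm0 : Nat.find hex ≠ 0 := by
      intro h
      rw [h, hf0] at hmspec
      exact absurd hmspec (not_lt.mpr hfeas)
    set m := Nat.find hex with hm
    have hk : m - 1 < n := by omega
    have hprev : f (m - 1) ≤ T := by
      have := Nat.find_min hex (m := m - 1) (by omega)
      exact not_lt.mp this
    set k' : Fin n := ⟨m - 1, hk⟩ with hk'
    have hfm : f m = f (m - 1) + (a2 k' - a1 k') * y k' := by
      have h := hstep (m - 1) hk
      rwa [Nat.sub_add_cancel (Nat.one_le_iff_ne_zero.mpr hm0)] at h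
    have hyk : y k' = 1 := by
      rcases hy k' with h | h
      · rw [h, mul_zero, add_zero] at hfm
        rw [hfm] at hmspec
        exact absurd hmspec (not_lt.mpr hprev)
      · exact h
    rw [hyk, mul_one] at hfm
    have hsum : (∑ i : Fin n, (if i = k' then T - f (m - 1) + a1 k'
        else (if (i : ℕ) < m - 1 then a2 i else a1 i) * y i)) = T := by
      have key2 : ∀ i : Fin n, (if i = k' then T - f (m - 1) + a1 k'
          else (if (i : ℕ) < m - 1 then a2 i else a1 i) * y i)
          = (if (i : ℕ) < m - 1 then a2 i else a1 i) * y i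
            + (if i = k' then T - f (m - 1) else 0) := by
        intro i
        by_cases h : i = k'
        · subst h
          rw [if_pos rfl, if_pos rfl]
          have hv : ((k' : Fin n) : ℕ) = m - 1 := rfl
          rw [hv, if_neg (Nat.lt_irrefl (m - 1)), hyk]
          ring
        · rw [if_neg h, if_neg h, add_zero]
      calc (∑ i : Fin n, (if i = k' then T - f (m - 1) + a1 k'
            else (if (i : ℕ) < m - 1 then a2 i else a1 i) * y i))
          = ∑ i : Fin n, ((if (i : ℕ) < m - 1 then a2 i else a1 i) * y i
            + (if i = k' then T - f (m - 1) else 0)) :=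
              Finset.sum_congr rfl (fun i _ => key2 i)
        _ = T := by
            rw [Finset.sum_add_distrib, Finset.sum_ite_eq' Finset.univ]
            simp [hf]
    refine ⟨fun i => if i = k' then T - f (m - 1) + a1 k'
        else (if (i : ℕ) < m - 1 then a2 i else a1 i) * y i, ?_, ?_, ?_⟩
    · intro i
      by_cases h : i = k'
      · subst h
        simp only [if_pos rfl, eq_self_iff_true, if_true]
        right
        constructor
        · linarith
        · rw [hfm] at hmspec; linarith
      · simp only [if_neg h]
        rcases hy i with h0 | h1
        · left; rw [h0, mul_zero]
        · rw [h1, mul_one]; right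
          split_ifs
          · exact ⟨hle i, le_refl _⟩
          · exact ⟨le_refl _, hle i⟩
    · rw [hsum]
    · rw [hsum, min_eq_right (le_of_lt hcase)]

private lemma issp_le (n : ℕ) (a1 a2 : Fin n → ℤ) (T : ℤ)
    (x : Fin n → ℤ) (hx : ∀ i, x i = 0 ∨ (a1 i ≤ x i ∧ x i ≤ a2 i))
    (hxT : (∑ i, x i) ≤ T) :
    ∃ y : Fin n → ℤ, (∀ i, y i = 0 ∨ y i = 1) ∧
      (∑ i, a1 i * y i) ≤ T ∧ (∑ i, x i) ≤ min (∑ i, a2 i * y i) T := by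
  refine ⟨fun i => if x i = 0 then 0 else 1, ?_, ?_, ?_⟩
  · intro i
    by_cases h : x i = 0 <;> simp [h]
  · refine le_trans (Finset.sum_le_sum ?_) hxT
    intro i _
    by_cases h : x i = 0
    · simp [h]
    · rcases hx i with h0 | ⟨h1, _⟩
      · exact absurd h0 h
      · simpa [h] using h1
  · refine le_min (Finset.sum_le_sum ?_) hxT
    intro i _
    by_cases h : x i = 0
    · simp [h]
    · rcases hx i with h0 | ⟨_, h2⟩
      · exact absurd h0 h
      · simpa [h] using h2

/-- The optimal value of the ISSP equals the optimal value of the associated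
0-1 problem `max { min(Σᵢ a_{i,2} yᵢ, T) : Σᵢ a_{i,1} yᵢ ≤ T, yᵢ ∈ {0,1} }`. -/
theorem stmt1 (n : ℕ) (a1 a2 : Fin n → ℤ) (T : ℤ)
    (hpos : ∀ i, 0 < a1 i) (hle : ∀ i, a1 i ≤ a2 i) (hT : ∀ i, a2 i < T) (v : ℤ) :
    IsGreatest {s : ℤ | ∃ x : Fin n → ℤ,
        (∀ i, x i = 0 ∨ (a1 i ≤ x i ∧ x i ≤ a2 i)) ∧
        (∑ i, x i) ≤ T ∧ s = ∑ i, x i} v ↔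
    IsGreatest {s : ℤ | ∃ y : Fin n → ℤ,
        (∀ i, y i = 0 ∨ y i = 1) ∧
        (∑ i, a1 i * y i) ≤ T ∧ s = min (∑ i, a2 i * y i) T} v := by
  constructor
  · rintro ⟨⟨x, hx, hxT, hvs⟩, hub⟩
    obtain ⟨y, hy01, hyT, hxle⟩ := issp_le n a1 a2 T x hx hxT
    have htS2 : min (∑ i, a2 i * y i) T ∈ {s : ℤ | ∃ y : Fin n → ℤ,
        (∀ i, y i = 0 ∨ y i = 1) ∧
        (∑ i, a1 i * y i) ≤ T ∧ s = min (∑ i, a2 i * y i) T} :=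
      ⟨y, hy01, hyT, rfl⟩
    have hvt : v ≤ min (∑ i, a2 i * y i) T := hvs ▸ hxle
    obtain ⟨x', hx', hx'T, hx'sum⟩ := issp_exists n a1 a2 T hle y hy01 hyT
    have htv : min (∑ i, a2 i * y i) T ≤ v := hub ⟨x', hx', hx'T, hx'sum.symm⟩
    have hveq : v = min (∑ i, a2 i * y i) T := le_antisymm hvt htv
    constructor
    · rw [hveq]; exact htS2
    · rintro s ⟨y', hy', hy'T, hsy'⟩
      obtain ⟨x'', hx'', hx''T, hx''sum⟩ := issp_exists n a1 a2 T hle y' hy' hy'T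
      exact hub ⟨x'', hx'', hx''T, by rw [hsy', ← hx''sum]⟩
  · rintro ⟨⟨y, hy, hyT, hvs⟩, hub⟩
    obtain ⟨x, hx, hxT, hxs⟩ := issp_exists n a1 a2 T hle y hy hyT
    constructor
    · exact ⟨x, hx, hxT, by rw [hvs, ← hxs]⟩
    · rintro s ⟨x', hx', hx'T, hsx'⟩
      obtain ⟨y', hy', hy'T, hx'le⟩ := issp_le n a1 a2 T x' hx' hx'T
      have ht : min (∑ i, a2 i * y' i) T ≤ v := hub ⟨y', hy', hy'T, rfl⟩
      exact le_trans (hsx' ▸ hx'le) ht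
end

section
/- If there exists a binary vector (ȳ₁,…,ȳₙ) with Σᵢ a_{i,1} ȳᵢ ≤ T ≤ Σᵢ a_{i,2} ȳᵢ, then the ISSP has optimal value exactly T, i.e., there exist integers xᵢ with each xᵢ ∈ {0} ∪ [a_{i,1}, a_{i,2}] and Σᵢ xᵢ = T. -/
lemma stmt2_aux : ∀ (n : ℕ) (a1 a2 : Fin n → ℤ) (T : ℤ),
    (∀ i, 0 < a1 i) → (∀ i, a1 i ≤ a2 i) → 0 ≤ T →
    ∀ y : Fin n → ℤ, (∀ i, y i = 0 ∨ y i = 1) →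
    (∑ i, a1 i * y i) ≤ T → T ≤ (∑ i, a2 i * y i) →
    ∃ x : Fin n → ℤ,
      (∀ i, x i = 0 ∨ (a1 i ≤ x i ∧ x i ≤ a2 i)) ∧ (∑ i, x i) = T := by
  intro n
  induction n with
  | zero =>
    intro a1 a2 T _ _ hT0 y _ h1 h2
    simp only [Finset.univ_eq_empty, Finset.sum_empty] at h1 h2 ⊢
    exact ⟨fun i => 0, fun i => Or.inl rfl, by omega⟩
  | succ n ih =>
    intro a1 a2 T hpos hle hT0 y hy h1 h2
    rw [Fin.sum_univ_castSucc] at h1 h2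
    set S1 := ∑ i : Fin n, a1 i.castSucc * y i.castSucc with hS1
    set S2 := ∑ i : Fin n, a2 i.castSucc * y i.castSucc with hS2
    have hynn : ∀ i : Fin (n+1), 0 ≤ y i := by
      intro i; rcases hy i with h | h <;> omega
    have hS1nn : 0 ≤ S1 :=
      Finset.sum_nonneg fun i _ => mul_nonneg (hpos _).le (hynn _)
    have hS12 : S1 ≤ S2 :=
      Finset.sum_le_sum fun i _ => mul_le_mul_of_nonneg_right (hle _) (hynn _)
    rcases hy (Fin.last n) with hy0 | hy1
    · -- last coordinate of y is 0
      rw [hy0, mul_zero, add_zero] at h1 h2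
      obtain ⟨x0, hx0, hsum⟩ := ih (fun i => a1 i.castSucc) (fun i => a2 i.castSucc)
        T (fun i => hpos _) (fun i => hle _) hT0
        (fun i => y i.castSucc) (fun i => hy _) h1 h2
      refine ⟨Fin.snoc x0 0, ?_, ?_⟩
      · intro i
        refine Fin.lastCases ?_ ?_ i
        · simp
        · intro j; simpa using hx0 j
      · rw [Fin.sum_univ_castSucc]; simp [hsum]
    · -- last coordinate of y is 1
      rw [hy1, mul_one] at h1 h2
      set c := min (a2 (Fin.last n)) (T - S1) with hc
      have hcle : c ≤ T - S1 := min_le_right _ _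
      have hca2 : c ≤ a2 (Fin.last n) := min_le_left _ _
      have hca1 : a1 (Fin.last n) ≤ c :=
        le_min (hle _) (by omega)
      have hT' : S1 ≤ T - c := by omega
      have hT'2 : T - c ≤ S2 := by
        rcases min_cases (a2 (Fin.last n)) (T - S1) with ⟨he, _⟩ | ⟨he, _⟩ <;> omega
      obtain ⟨x0, hx0, hsum⟩ := ih (fun i => a1 i.castSucc) (fun i => a2 i.castSucc)
        (T - c) (fun i => hpos _) (fun i => hle _) (by omega)
        (fun i => y i.castSucc) (fun i => hy _) hT' hT'2
      refine ⟨Fin.snoc x0 c, ?_, ?_⟩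
      · intro i
        refine Fin.lastCases ?_ ?_ i
        · right; simpa using ⟨hca1, hca2⟩
        · intro j; simpa using hx0 j
      · rw [Fin.sum_univ_castSucc]; simp [hsum]

/-- If there is a binary vector `ȳ` with `Σᵢ a_{i,1} ȳᵢ ≤ T ≤ Σᵢ a_{i,2} ȳᵢ`,
then the ISSP has optimal value exactly `T`. -/
theorem stmt2 (n : ℕ) (a1 a2 : Fin n → ℤ) (T : ℤ)
    (hpos : ∀ i, 0 < a1 i) (hle : ∀ i, a1 i ≤ a2 i) (hTpos : 0 < T)
    (y : Fin n → ℤ) (hy : ∀ i, y i = 0 ∨ y i = 1)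
    (h1 : (∑ i, a1 i * y i) ≤ T) (h2 : T ≤ ∑ i, a2 i * y i) :
    ∃ x : Fin n → ℤ,
      (∀ i, x i = 0 ∨ (a1 i ≤ x i ∧ x i ≤ a2 i)) ∧ (∑ i, x i) = T :=
  stmt2_aux n a1 a2 T hpos hle hTpos.le y hy h1 h2
end

section
/- If the inputs of the ISSP satisfy T ≥ ⌈(maxᵢ a_{i,1}) / (minᵢ (a_{i,2} − a_{i,1}))⌉ · maxᵢ a_{i,1}, with minᵢ (a_{i,2} − a_{i,1}) > 0, and T < Σᵢ a_{i,1}, then letting I ≥ 0 be the index with Σ_{i=1}^{I} a_{i,1} ≤ T < Σ_{i=1}^{I+1} a_{i,1}, one has Σ_{i=1}^{I} a_{i,2} > T; consequently the ISSP optimal value equals T. -/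
/-!
If `d` is the least interval width and `M` the largest lower end, then `⌈M / d⌉ · M ≤ T`
forces the greedy prefix `I` of lower ends to be long: `T < (I + 1) M` gives `⌈M / d⌉ ≤ I`,
hence `M ≤ I d`, so raising each of the first `I` items to its upper end adds at least
`I d ≥ M > T - Σ_{i<I} a_{i,1}`. Any amount between `0` and the total slack of those items can
be distributed among them, which produces a feasible point of value exactly `T`.
-/

open Finset

theorem exists_sum_eq_of_le_sum {ι : Type*} {s : Finset ι} {b : ι → ℤ}
    (hb : ∀ i ∈ s, 0 ≤ b i) {r : ℤ} (hr₀ : 0 ≤ r) (hr : r ≤ ∑ i ∈ s, b i) :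
    ∃ y : ι → ℤ, (∀ i ∈ s, 0 ≤ y i ∧ y i ≤ b i) ∧ ∑ i ∈ s, y i = r := by
  classical
  induction s using Finset.induction_on generalizing r with
  | empty => exact ⟨0, by simp, by simp only [sum_empty] at hr ⊢; omega⟩
  | insert a s ha ih =>
    rw [sum_insert ha] at hr
    have hbs : ∀ i ∈ s, 0 ≤ b i := fun i hi => hb i (mem_insert_of_mem hi)
    have hba := hb a (mem_insert_self a s)
    obtain ⟨y, hy, hsum⟩ := ih hbs (le_min hr₀ (sum_nonneg hbs)) (min_le_right r _)
    refine ⟨Function.update y a (r - min r (∑ i ∈ s, b i)), ?_, ?_⟩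
    · intro i hi
      rcases eq_or_ne i a with rfl | hia
      · simp only [Function.update_self]
        constructor <;> omega
      · simpa [Function.update_of_ne hia] using hy i ((mem_insert.mp hi).resolve_left hia)
    · rw [sum_insert ha, sum_update_of_notMem ha, hsum, Function.update_self]
      omega

theorem le_mul_of_ceil_div_le {M d k : ℤ} (hd : 0 < d) (h : ⌈(M : ℚ) / d⌉ ≤ k) : M ≤ k * d := by
  have hdq : (0 : ℚ) < d := by exact_mod_cast hd
  exact_mod_cast (div_le_iff₀ hdq).mp (Int.ceil_le.mp h)

theorem lt_sum_range_of_ceil_mul_le {a1 a2 : ℕ → ℤ} {T M d : ℤ} {I : ℕ}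
    (hMub : ∀ i ≤ I, a1 i ≤ M) (hdlb : ∀ i < I, d ≤ a2 i - a1 i) (hd : 0 < d)
    (hT : ⌈(M : ℚ) / d⌉ * M ≤ T) (hI1 : ∑ i ∈ range I, a1 i ≤ T)
    (hI2 : T < ∑ i ∈ range (I + 1), a1 i) :
    T < ∑ i ∈ range I, a2 i := by
  rw [sum_range_succ] at hI2
  have hMI := hMub I le_rfl
  have hprefix : ∑ i ∈ range I, a1 i ≤ I * M := by
    simpa using sum_le_card_nsmul (range I) a1 M fun i hi => hMub i (mem_range.mp hi).le
  have hceil : ⌈(M : ℚ) / d⌉ < I + 1 :=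
    lt_of_mul_lt_mul_right (hT.trans_lt (by linarith)) (by linarith)
  have hMId : M ≤ I * d := le_mul_of_ceil_div_le hd (Int.lt_add_one_iff.mp hceil)
  have hslack : I * d ≤ ∑ i ∈ range I, (a2 i - a1 i) := by
    simpa using card_nsmul_le_sum (range I) _ d fun i hi => hdlb i (mem_range.mp hi)
  rw [sum_sub_distrib] at hslack
  linarith

theorem stmt4_general (n : ℕ) (a1 a2 : ℕ → ℤ) (T M d : ℤ)
    (hMub : ∀ i < n, a1 i ≤ M)
    (hdlb : ∀ i < n, d ≤ a2 i - a1 i)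
    (hd : 0 < d)
    (hT : ⌈(M : ℚ) / (d : ℚ)⌉ * M ≤ T)
    (I : ℕ) (hIn : I < n)
    (hI1 : (∑ i ∈ Finset.range I, a1 i) ≤ T)
    (hI2 : T < ∑ i ∈ Finset.range (I + 1), a1 i) :
    T < (∑ i ∈ Finset.range I, a2 i) ∧
    ∃ x : ℕ → ℤ,
      (∀ i < n, x i = 0 ∨ (a1 i ≤ x i ∧ x i ≤ a2 i)) ∧
      (∑ i ∈ Finset.range n, x i) = T := by
  have hupper : T < ∑ i ∈ range I, a2 i :=
    lt_sum_range_of_ceil_mul_le (fun i hi => hMub i (hi.trans_lt hIn))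
      (fun i hi => hdlb i (hi.trans hIn)) hd hT hI1 hI2
  obtain ⟨y, hy, hysum⟩ := exists_sum_eq_of_le_sum (s := range I) (b := fun i => a2 i - a1 i)
    (fun i hi => hd.le.trans (hdlb i ((mem_range.mp hi).trans hIn))) (sub_nonneg.mpr hI1)
    (by rw [sum_sub_distrib]; linarith)
  refine ⟨hupper, fun i => if i < I then a1 i + y i else 0, fun i _ => ?_, ?_⟩
  · by_cases hiI : i < I
    · have hyi := hy i (mem_range.mpr hiI)
      right
      simp only [if_pos hiI]
      constructor <;> linarith
    · simp [hiI]
  · rw [← sum_range_add_sum_Ico _ hIn.le, sum_eq_zero fun i hi => if_neg (mem_Ico.mp hi).1.not_gt,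
      sum_congr rfl fun i hi => if_pos (mem_range.mp hi), sum_add_distrib, hysum]
    ring

/-- If `T ≥ ⌈(maxᵢ a_{i,1})/(minᵢ (a_{i,2}-a_{i,1}))⌉ · maxᵢ a_{i,1}` with
`minᵢ (a_{i,2}-a_{i,1}) > 0` and `T < Σᵢ a_{i,1}`, then for the index `I` with
`Σ_{i<I} a_{i,1} ≤ T < Σ_{i<I+1} a_{i,1}` one has `Σ_{i<I} a_{i,2} > T`, and
consequently the ISSP optimal value equals `T`. -/
theorem stmt4 (n : ℕ) (a1 a2 : ℕ → ℤ) (T M d : ℤ)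
    (hpos : ∀ i < n, 0 < a1 i) (hle : ∀ i < n, a1 i ≤ a2 i)
    (hTmax : ∀ i < n, a2 i < T)
    (hMub : ∀ i < n, a1 i ≤ M) (hMmem : ∃ i < n, a1 i = M)
    (hdlb : ∀ i < n, d ≤ a2 i - a1 i) (hdmem : ∃ i < n, a2 i - a1 i = d)
    (hd : 0 < d)
    (hT : ⌈(M : ℚ) / (d : ℚ)⌉ * M ≤ T)
    (hTlt : T < ∑ i ∈ Finset.range n, a1 i)
    (I : ℕ) (hIn : I < n)
    (hI1 : (∑ i ∈ Finset.range I, a1 i) ≤ T)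
    (hI2 : T < ∑ i ∈ Finset.range (I + 1), a1 i) :
    T < (∑ i ∈ Finset.range I, a2 i) ∧
    ∃ x : ℕ → ℤ,
      (∀ i < n, x i = 0 ∨ (a1 i ≤ x i ∧ x i ≤ a2 i)) ∧
      (∑ i ∈ Finset.range n, x i) = T :=
  stmt4_general n a1 a2 T M d hMub hdlb hd hT I hIn hI1 hI2
end

section
/- For any j ∈ {1,…,n}, the union over j of the intervals [Σ_{i=1}^j a_{i,1}, Σ_{i=1}^j a_{i,2}] intersected with (Σ_{i=1}^{j-1} a_{i,2}, Σ_{i=1}^{j} a_{i,2}] has total length at least Σ_{j=2}^n min( Σ_{i=1}^j (1 − 1/c)·a_{i,2}, a_{j,2} ), provided a_{i,2} ≥ c·a_{i,1} for all i with c > 1. -/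
/-!
The sets indexed by `j` lie in the consecutive intervals `(S_j, S_{j+1}]` of the partial sums
`S_j = Σ_{i<j} a_{i,2}`, so they are disjoint and it suffices to bound each one. The `j`-th set
contains `(max(Σ_{i≤j} a_{i,1}, S_j), S_{j+1}]`, of length `min(S_{j+1} - Σ_{i≤j} a_{i,1}, a_{j,2})`,
and `a_{i,2} - a_{i,1} ≥ (1 - 1/c) a_{i,2}` termwise.
-/

open MeasureTheory Finset

theorem MeasureTheory.ofReal_sum_le_measure_biUnion {α ι : Type*} [MeasurableSpace α]
    (μ : Measure α) (s : Finset ι) (S : ι → Set α) (f : ι → ℝ)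
    (hmeas : ∀ j ∈ s, MeasurableSet (S j)) (hdisj : (s : Set ι).PairwiseDisjoint S)
    (hle : ∀ j ∈ s, ENNReal.ofReal (f j) ≤ μ (S j)) :
    ENNReal.ofReal (∑ j ∈ s, f j) ≤ μ (⋃ j ∈ s, S j) :=
  calc ENNReal.ofReal (∑ j ∈ s, f j)
      ≤ ∑ j ∈ s, ENNReal.ofReal (f j) :=
        le_sum_of_subadditive _ ENNReal.ofReal_zero.le (fun _ _ ↦ ENNReal.ofReal_add_le) s f
    _ ≤ ∑ j ∈ s, μ (S j) := sum_le_sum hle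
    _ = μ (⋃ j ∈ s, S j) := (measure_biUnion_finset hdisj hmeas).symm

theorem Finset.pairwiseDisjoint_Ioc_partialSum {β : Type*} [AddCommMonoid β] [PartialOrder β]
    [IsOrderedAddMonoid β] {n : ℕ} {y : ℕ → β} (hy : ∀ i < n, 0 ≤ y i) :
    (range n : Set ℕ).PairwiseDisjoint
      fun j ↦ Set.Ioc (∑ i ∈ range j, y i) (∑ i ∈ range (j + 1), y i) := by
  have disjoint_of_lt : ∀ j k, j < k → k < n →
      Disjoint (Set.Ioc (∑ i ∈ range j, y i) (∑ i ∈ range (j + 1), y i))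
        (Set.Ioc (∑ i ∈ range k, y i) (∑ i ∈ range (k + 1), y i)) := by
    intro j k hjk hkn
    have hmono : ∑ i ∈ range (j + 1), y i ≤ ∑ i ∈ range k, y i :=
      sum_le_sum_of_subset_of_nonneg (range_subset_range.mpr hjk) fun i hi _ ↦
        hy i ((mem_range.mp hi).trans hkn)
    exact Set.disjoint_left.mpr fun x hxj hxk ↦ (hxj.2.trans hmono).not_gt hxk.1
  intro j hj k hk hne
  rcases hne.lt_or_gt with h | h
  · exact disjoint_of_lt j k h (mem_range.mp hk)
  · exact (disjoint_of_lt k j h (mem_range.mp hj)).symm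

theorem Real.volume_Icc_inter_Ioc_same_right (a b c : ℝ) :
    volume (Set.Icc a c ∩ Set.Ioc b c) = ENNReal.ofReal (min (c - a) (c - b)) := by
  rw [min_sub_sub_left]
  apply le_antisymm
  · calc volume (Set.Icc a c ∩ Set.Ioc b c) ≤ volume (Set.Icc (max a b) c) :=
          measure_mono fun x ⟨⟨hax, hxc⟩, hbx, _⟩ ↦ ⟨max_le hax hbx.le, hxc⟩
      _ = ENNReal.ofReal (c - max a b) := Real.volume_Icc
  · calc ENNReal.ofReal (c - max a b) = volume (Set.Ioc (max a b) c) := Real.volume_Ioc.symm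
      _ ≤ volume (Set.Icc a c ∩ Set.Ioc b c) :=
          measure_mono fun x ⟨hx, hxc⟩ ↦
            ⟨⟨(le_max_left a b).trans hx.le, hxc⟩, (le_max_right a b).trans_lt hx, hxc⟩

theorem one_sub_one_div_mul_le_sub {c x y : ℝ} (hc : 0 < c) (h : c * x ≤ y) :
    (1 - 1 / c) * y ≤ y - x := by
  have : x ≤ y / c := by rw [le_div_iff₀ hc]; linarith
  have hsplit : (1 - 1 / c) * y = y - y / c := by ring
  linarith

theorem ofReal_sum_min_le_volume_biUnion {n : ℕ} {x y : ℕ → ℝ} {c : ℝ} (hc : 0 < c)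
    (hy : ∀ i < n, 0 ≤ y i) (hxy : ∀ i < n, c * x i ≤ y i) {s : Finset ℕ} (hs : s ⊆ range n) :
    ENNReal.ofReal (∑ j ∈ s, min (∑ i ∈ range (j + 1), (1 - 1 / c) * y i) (y j)) ≤
      volume (⋃ j ∈ s, Set.Icc (∑ i ∈ range (j + 1), x i) (∑ i ∈ range (j + 1), y i) ∩
        Set.Ioc (∑ i ∈ range j, y i) (∑ i ∈ range (j + 1), y i)) := by
  refine ofReal_sum_le_measure_biUnion _ _ _ _
    (fun _ _ ↦ measurableSet_Icc.inter measurableSet_Ioc) ?_ fun j hj ↦ ?_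
  · exact ((pairwiseDisjoint_Ioc_partialSum hy).subset (coe_subset.mpr hs)).mono
      fun _ ↦ Set.inter_subset_right
  · have hjn : j < n := mem_range.mp (hs hj)
    rw [Real.volume_Icc_inter_Ioc_same_right, sum_range_succ y j, add_sub_cancel_left]
    refine ENNReal.ofReal_le_ofReal (min_le_min ?_ le_rfl)
    rw [← sum_range_succ y j, ← sum_sub_distrib]
    exact sum_le_sum fun i hi ↦
      one_sub_one_div_mul_le_sub hc (hxy i ((mem_range.mp hi).trans_le hjn))

theorem stmt6_general (n : ℕ) (a1 a2 : ℕ → ℤ) (c : ℝ) (hc : 1 < c)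
    (hpos : ∀ i < n, 0 < a1 i)
    (hca : ∀ i < n, c * (a1 i : ℝ) ≤ (a2 i : ℝ)) :
    volume (⋃ j ∈ Finset.Ico 1 n,
        (Set.Icc ((∑ i ∈ Finset.range (j + 1), a1 i : ℤ) : ℝ)
                 ((∑ i ∈ Finset.range (j + 1), a2 i : ℤ) : ℝ) ∩
         Set.Ioc ((∑ i ∈ Finset.range j, a2 i : ℤ) : ℝ)
                 ((∑ i ∈ Finset.range (j + 1), a2 i : ℤ) : ℝ))) ≥
      ENNReal.ofReal (∑ j ∈ Finset.Ico 1 n,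
        min (∑ i ∈ Finset.range (j + 1), (1 - 1 / c) * ((a2 i : ℤ) : ℝ))
            ((a2 j : ℝ))) := by
  have ha2 : ∀ i < n, 0 ≤ (a2 i : ℝ) := fun i hi ↦ by
    have : (0 : ℝ) < a1 i := by exact_mod_cast hpos i hi
    nlinarith [hca i hi]
  push_cast
  exact ofReal_sum_min_le_volume_biUnion (by linarith) ha2 hca
    fun j hj ↦ mem_range.mpr (mem_Ico.mp hj).2

/-- The union over `j` of `[Σ_{i≤j} a_{i,1}, Σ_{i≤j} a_{i,2}] ∩ (Σ_{i<j} a_{i,2}, Σ_{i≤j} a_{i,2}]`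
has total length at least `Σ_j min(Σ_{i≤j} (1-1/c) a_{i,2}, a_{j,2})`, provided
`a_{i,2} ≥ c a_{i,1}` for all `i` with `c > 1`. (Indices shifted so that `i = 0,…,n-1`
and `a_{0,2} = maxᵢ a_{i,2}`.) -/
theorem stmt6 (n : ℕ) (hn : 2 ≤ n) (a1 a2 : ℕ → ℤ) (c : ℝ) (hc : 1 < c)
    (hpos : ∀ i < n, 0 < a1 i) (hle : ∀ i < n, a1 i ≤ a2 i)
    (hca : ∀ i < n, c * (a1 i : ℝ) ≤ (a2 i : ℝ))
    (hmax : ∀ i < n, a2 i ≤ a2 0) :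
    volume (⋃ j ∈ Finset.Ico 1 n,
        (Set.Icc ((∑ i ∈ Finset.range (j + 1), a1 i : ℤ) : ℝ)
                 ((∑ i ∈ Finset.range (j + 1), a2 i : ℤ) : ℝ) ∩
         Set.Ioc ((∑ i ∈ Finset.range j, a2 i : ℤ) : ℝ)
                 ((∑ i ∈ Finset.range (j + 1), a2 i : ℤ) : ℝ))) ≥
      ENNReal.ofReal (∑ j ∈ Finset.Ico 1 n,
        min (∑ i ∈ Finset.range (j + 1), (1 - 1 / c) * ((a2 i : ℤ) : ℝ))
            ((a2 j : ℝ))) :=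
  stmt6_general n a1 a2 c hc hpos hca
end

section
/- Under the assumption a_{i,2} ≥ c·a_{i,1} for all i with c > 1, if T is chosen uniformly at random from the interval (maxᵢ a_{i,2}, Σᵢ a_{i,2}], then the probability that there exists a subset S ⊆ {1,…,n} with Σ_{i∈S} a_{i,1} ≤ T ≤ Σ_{i∈S} a_{i,2} (equivalently, that T is achievable as the ISSP optimal value) is at least min(1, 2(1 − 1/c)). -/
/-!
Write `A k`, `B k` for the prefix sums of the lower and upper weights, so `B 1 = b₂₀` is the
largest upper weight. Cut `(B 1, B n]` into the blocks `(B k, B (k + 1)]`: inside a block the first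
`k + 1` items witness every target above `A (k + 1)`, so only `(B k, A (k + 1)]` can fail. Since
`c A (k + 1) ≤ B k + b₂ₖ` and `b₂ₖ ≤ B k`, that piece has length at most `(2 / c - 1) b₂ₖ`, and
summing over the blocks bounds the failing part by a `max 0 (2 / c - 1)` fraction of the interval.
-/

open MeasureTheory Set Finset

def achievableTargets (n : ℕ) (b1 b2 : ℕ → ℝ) : Set ℝ :=
  {t | ∃ S ⊆ range n, ∑ i ∈ S, b1 i ≤ t ∧ t ≤ ∑ i ∈ S, b2 i}

lemma min_one_two_mul_one_sub_one_div_eq (c : ℝ) :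
    min 1 (2 * (1 - 1 / c)) = 1 - max 0 (2 / c - 1) := by
  rw [← min_sub_sub_left, sub_zero]
  ring_nf

lemma sub_le_max_zero_two_div_sub_one_mul {a B b c : ℝ} (hc : 1 ≤ c) (hcab : c * a ≤ B + b)
    (hbB : b ≤ B) (hb : 0 ≤ b) : a - B ≤ max 0 (2 / c - 1) * b := by
  have hc0 : 0 < c := by linarith
  have hcinv : 0 ≤ 1 - 1 / c := sub_nonneg.2 ((div_le_one hc0).2 hc)
  calc a - B ≤ (B + b) / c - B := by gcongr; exact (le_div_iff₀' hc0).2 hcab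
    _ = b / c - (1 - 1 / c) * B := by ring
    _ ≤ b / c - (1 - 1 / c) * b := by gcongr
    _ = (2 / c - 1) * b := by ring
    _ ≤ max 0 (2 / c - 1) * b := by gcongr; exact le_max_right _ _

section

variable {n : ℕ} {b1 b2 : ℕ → ℝ} {c : ℝ}

lemma Ioc_sum_range_diff_achievableTargets_subset {k : ℕ} (hk : k < n) :
    Ioc (∑ i ∈ range k, b2 i) (∑ i ∈ range (k + 1), b2 i) \ achievableTargets n b1 b2 ⊆
      Ioc (∑ i ∈ range k, b2 i) (∑ i ∈ range (k + 1), b1 i) := by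
  rintro t ⟨⟨hlo, hhi⟩, hbad⟩
  exact ⟨hlo, le_of_not_gt fun hlt => hbad ⟨range (k + 1), range_subset_range.2 hk, hlt.le, hhi⟩⟩

lemma volume_Ioc_diff_achievableTargets_le (hc : 1 ≤ c) (hb1 : ∀ i < n + 1, 0 ≤ b1 i)
    (hca : ∀ i < n + 1, c * b1 i ≤ b2 i) (hmax : ∀ i < n + 1, b2 i ≤ b2 0) :
    volume (Ioc (b2 0) (∑ i ∈ range (n + 1), b2 i) \ achievableTargets (n + 1) b1 b2) ≤
      ENNReal.ofReal (max 0 (2 / c - 1) * (∑ i ∈ range (n + 1), b2 i - b2 0)) := by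
  set A : ℕ → ℝ := fun k => ∑ i ∈ range k, b1 i
  set B : ℕ → ℝ := fun k => ∑ i ∈ range k, b2 i
  set d := max 0 (2 / c - 1)
  have hb2 : ∀ i < n + 1, 0 ≤ b2 i := fun i hi =>
    (mul_nonneg (by linarith) (hb1 i hi)).trans (hca i hi)
  have hcover : Ioc (b2 0) (B (n + 1)) \ achievableTargets (n + 1) b1 b2 ⊆
      ⋃ i ∈ range n, Ioc (B (i + 1)) (A (i + 2)) := by
    intro t ht
    have hblock := Ioc_subset_biUnion_Ioc n (fun i => B (i + 1)) (by simpa [B] using ht.1)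
    obtain ⟨i, hi, hti⟩ := mem_iUnion₂.1 hblock
    exact mem_iUnion₂.2 ⟨i, hi,
      Ioc_sum_range_diff_achievableTargets_subset (by simpa using hi) ⟨hti, ht.2⟩⟩
  have hgap : ∀ i ∈ range n, A (i + 2) - B (i + 1) ≤ d * b2 (i + 1) := by
    intro i hi
    have hi' : i + 1 < n + 1 := by simpa using hi
    refine sub_le_max_zero_two_div_sub_one_mul hc ?_ ?_ (hb2 _ hi')
    · rw [← sum_range_succ, mul_sum]
      exact sum_le_sum fun j hj => hca j (by have := mem_range.1 hj; omega)
    · exact (hmax _ hi').trans <|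
        single_le_sum (fun j hj => hb2 j (by have := mem_range.1 hj; omega)) (mem_range.2 i.succ_pos)
  calc _ ≤ volume (⋃ i ∈ range n, Ioc (B (i + 1)) (A (i + 2))) := measure_mono hcover
    _ ≤ ∑ i ∈ range n, volume (Ioc (B (i + 1)) (A (i + 2))) := measure_biUnion_finset_le _ _
    _ ≤ ∑ i ∈ range n, ENNReal.ofReal (d * b2 (i + 1)) := sum_le_sum fun i hi => by
        rw [Real.volume_Ioc]; exact ENNReal.ofReal_le_ofReal (hgap i hi)
    _ = ENNReal.ofReal (d * (B (n + 1) - b2 0)) := by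
        rw [← ENNReal.ofReal_sum_of_nonneg fun i hi =>
          mul_nonneg (le_max_left _ _) (hb2 _ (by simpa using hi)), ← mul_sum]
        simp only [B, d, sum_range_succ' b2 n, add_sub_cancel_right]

theorem ofReal_mul_le_volume_Ioc_inter_achievableTargets (hc : 1 ≤ c)
    (hb1 : ∀ i < n + 1, 0 ≤ b1 i) (hca : ∀ i < n + 1, c * b1 i ≤ b2 i)
    (hmax : ∀ i < n + 1, b2 i ≤ b2 0) :
    ENNReal.ofReal (min 1 (2 * (1 - 1 / c)) * (∑ i ∈ range (n + 1), b2 i - b2 0)) ≤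
      volume (Ioc (b2 0) (∑ i ∈ range (n + 1), b2 i) ∩ achievableTargets (n + 1) b1 b2) := by
  set I := Ioc (b2 0) (∑ i ∈ range (n + 1), b2 i)
  set T := achievableTargets (n + 1) b1 b2
  have hL : 0 ≤ ∑ i ∈ range (n + 1), b2 i - b2 0 := by
    rw [sum_range_succ', add_sub_cancel_right]
    exact sum_nonneg fun i hi =>
      (mul_nonneg (by linarith) (hb1 _ (by simpa using hi))).trans (hca _ (by simpa using hi))
  rw [min_one_two_mul_one_sub_one_div_eq, sub_mul, one_mul,
    ENNReal.ofReal_sub _ (mul_nonneg (le_max_left _ _) hL), tsub_le_iff_right]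
  calc ENNReal.ofReal (∑ i ∈ range (n + 1), b2 i - b2 0) = volume I := Real.volume_Ioc.symm
    _ ≤ volume (I ∩ T) + volume (I \ T) := by
        conv_lhs => rw [← inter_union_sdiff I T]
        exact measure_union_le _ _
    _ ≤ _ := by gcongr; exact volume_Ioc_diff_achievableTargets_le hc hb1 hca hmax

end

theorem stmt7_general (n : ℕ) (hn : 2 ≤ n) (a1 a2 : ℕ → ℤ) (c : ℝ) (hc : 1 < c)
    (hpos : ∀ i < n, 0 < a1 i)
    (hca : ∀ i < n, c * (a1 i : ℝ) ≤ (a2 i : ℝ))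
    (hmax : ∀ i < n, a2 i ≤ a2 0) :
    volume {t : ℝ | t ∈ Set.Ioc ((a2 0 : ℝ)) ((∑ i ∈ Finset.range n, a2 i : ℤ) : ℝ) ∧
        ∃ S ⊆ Finset.range n,
          ((∑ i ∈ S, a1 i : ℤ) : ℝ) ≤ t ∧ t ≤ ((∑ i ∈ S, a2 i : ℤ) : ℝ)} ≥
      ENNReal.ofReal (min 1 (2 * (1 - 1 / c)) *
        (((∑ i ∈ Finset.range n, a2 i : ℤ) : ℝ) - (a2 0 : ℝ))) := by
  obtain ⟨m, rfl⟩ : ∃ m, n = m + 1 := ⟨n - 1, by omega⟩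
  simp only [Int.cast_sum]
  exact ofReal_mul_le_volume_Ioc_inter_achievableTargets (b1 := fun i => (a1 i : ℝ)) hc.le
    (fun i hi => by exact_mod_cast (hpos i hi).le) hca (fun i hi => by exact_mod_cast hmax i hi)

/-- If `a_{i,2} ≥ c a_{i,1}` for all `i` with `c > 1`, and `T` is uniform on
`(maxᵢ a_{i,2}, Σᵢ a_{i,2}]`, then the probability that some subset `S` satisfies
`Σ_{i∈S} a_{i,1} ≤ T ≤ Σ_{i∈S} a_{i,2}` is at least `min 1 (2(1-1/c))`.
(Stated via Lebesgue measure: the set of good targets in the interval has measure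
at least `min 1 (2(1-1/c))` times the length of the interval; `a_{0,2} = maxᵢ a_{i,2}`.) -/
theorem stmt7 (n : ℕ) (hn : 2 ≤ n) (a1 a2 : ℕ → ℤ) (c : ℝ) (hc : 1 < c)
    (hpos : ∀ i < n, 0 < a1 i) (hle : ∀ i < n, a1 i ≤ a2 i)
    (hca : ∀ i < n, c * (a1 i : ℝ) ≤ (a2 i : ℝ))
    (hmax : ∀ i < n, a2 i ≤ a2 0) :
    volume {t : ℝ | t ∈ Set.Ioc ((a2 0 : ℝ)) ((∑ i ∈ Finset.range n, a2 i : ℤ) : ℝ) ∧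
        ∃ S ⊆ Finset.range n,
          ((∑ i ∈ S, a1 i : ℤ) : ℝ) ≤ t ∧ t ≤ ((∑ i ∈ S, a2 i : ℤ) : ℝ)} ≥
      ENNReal.ofReal (min 1 (2 * (1 - 1 / c)) *
        (((∑ i ∈ Finset.range n, a2 i : ℤ) : ℝ) - (a2 0 : ℝ))) :=
  stmt7_general n hn a1 a2 c hc hpos hca hmax
end

section
/- The ISSP has an optimal solution with at most one midrange interval: there exists an optimal solution x* such that at most one index i satisfies a_{i,1} < x*ᵢ < a_{i,2}. -/
/-- The ISSP has an optimal solution with at most one midrange interval. -/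
theorem stmt8 (n : ℕ) (a1 a2 : Fin n → ℤ) (T : ℤ)
    (hpos : ∀ i, 0 < a1 i) (hle : ∀ i, a1 i ≤ a2 i) (hT : ∀ i, a2 i < T)
    (hTpos : 0 < T) :
    ∃ x : Fin n → ℤ,
      ((∀ i, x i = 0 ∨ (a1 i ≤ x i ∧ x i ≤ a2 i)) ∧ (∑ i, x i) ≤ T) ∧
      (∀ x' : Fin n → ℤ,
        (∀ i, x' i = 0 ∨ (a1 i ≤ x' i ∧ x' i ≤ a2 i)) → (∑ i, x' i) ≤ T →
        (∑ i, x' i) ≤ ∑ i, x i) ∧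
      (∀ i j : Fin n,
        (a1 i < x i ∧ x i < a2 i) → (a1 j < x j ∧ x j < a2 j) → i = j) := by
  classical
  let S : Finset (Fin n → ℤ) :=
    (Fintype.piFinset fun i => insert 0 (Finset.Icc (a1 i) (a2 i))).filter
      fun x => ∑ i, x i ≤ T
  have memS : ∀ x : Fin n → ℤ, x ∈ S ↔
      ((∀ i, x i = 0 ∨ (a1 i ≤ x i ∧ x i ≤ a2 i)) ∧ ∑ i, x i ≤ T) := by
    intro x
    simp [S, Fintype.mem_piFinset, Finset.mem_Icc]
  have h0 : (0 : Fin n → ℤ) ∈ S := by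
    rw [memS]
    exact ⟨fun i => Or.inl rfl, by simp [hTpos.le]⟩
  obtain ⟨x0, hx0S, hx0max⟩ := Finset.exists_max_image S (fun x => ∑ i, x i) ⟨0, h0⟩
  let S' := S.filter fun x => ∑ i, x i = ∑ i, x0 i
  have hx0' : x0 ∈ S' := by simp [S', hx0S]
  obtain ⟨x, hxS', hxmax⟩ := Finset.exists_max_image S' (fun x => ∑ i, (x i) ^ 2) ⟨x0, hx0'⟩
  have hxS : x ∈ S := (Finset.mem_filter.mp hxS').1
  have hxsum : ∑ i, x i = ∑ i, x0 i := (Finset.mem_filter.mp hxS').2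
  have hxfeas := (memS x).mp hxS
  refine ⟨x, hxfeas, ?_, ?_⟩
  · intro x' h1 h2
    rw [hxsum]
    exact hx0max x' ((memS x').mpr ⟨h1, h2⟩)
  · have key : ∀ i j : Fin n, i ≠ j → a1 i < x i → x i ≤ a2 i →
        a1 j ≤ x j → x j < a2 j → x i ≤ x j → False := by
      intro i j hij hi1 hi2 hj1 hj2 hord
      set y : Fin n → ℤ :=
        fun k => x k + (if k = i then -1 else 0) + (if k = j then 1 else 0) with hy
      have hyi : y i = x i - 1 := by simp [hy, hij]; ring
      have hyj : y j = x j + 1 := by simp [hy, Ne.symm hij]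
      have hyk : ∀ k, k ≠ i → k ≠ j → y k = x k := by
        intro k h1 h2; simp [hy, h1, h2]
      have hyfeas : ∀ k, y k = 0 ∨ (a1 k ≤ y k ∧ y k ≤ a2 k) := by
        intro k
        by_cases h1 : k = i
        · subst h1
          right
          rw [hyi]
          constructor <;> omega
        · by_cases h2 : k = j
          · subst h2
            right
            rw [hyj]
            constructor <;> omega
          · rw [hyk k h1 h2]; exact hxfeas.1 k
      have hsumy : ∑ k, y k = ∑ k, x k := by
        simp [hy, Finset.sum_add_distrib]
      have hsqy : ∑ k, (y k) ^ 2 = (∑ k, (x k) ^ 2) + (2 * (x j - x i) + 2) := by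
        have hpt : ∀ k, (y k) ^ 2 = (x k) ^ 2
            + (if k = i then (x i - 1) ^ 2 - (x i) ^ 2 else 0)
            + (if k = j then (x j + 1) ^ 2 - (x j) ^ 2 else 0) := by
          intro k
          by_cases h1 : k = i
          · subst h1; rw [hyi]; simp [hij]
          · by_cases h2 : k = j
            · subst h2; rw [hyj]; simp [h1]
            · rw [hyk k h1 h2]; simp [h1, h2]
        rw [Finset.sum_congr rfl fun k _ => hpt k]
        simp [Finset.sum_add_distrib]
        ring
      have hyS' : y ∈ S' := by
        rw [Finset.mem_filter]
        refine ⟨(memS y).mpr ⟨hyfeas, ?_⟩, ?_⟩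
        · rw [hsumy]; exact hxfeas.2
        · rw [hsumy]; exact hxsum
      have := hxmax y hyS'
      rw [hsqy] at this
      linarith
    intro i j hi hj
    by_contra hij
    rcases le_total (x i) (x j) with h | h
    · exact key i j hij hi.1 hi.2.le hj.1.le hj.2 h
    · exact key j i (Ne.symm hij) hj.1 hj.2.le hi.1.le hi.2 h
end

section
/- Suppose the intervals are sorted by length: a_{1,2} − a_{1,1} ≤ a_{2,2} − a_{2,1} ≤ … ≤ a_{n,2} − a_{n,1}. Then the ISSP has an optimal solution x* with at most one midrange index j (i.e., a_{j,1} < x*_j < a_{j,2}) such that x*ᵢ = 0 for all i > j; that is, no left or right anchored interval follows the midrange interval. -/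
/-- Potential: weighted count of midrange indices. -/
def issp9phi (n : ℕ) (a1 a2 : Fin n → ℤ) (x : Fin n → ℤ) : ℕ :=
  ∑ j ∈ Finset.univ.filter (fun j => a1 j < x j ∧ x j < a2 j), (n - j.val)

lemma issp9insert_le {α : Type*} [DecidableEq α] (s : Finset α) (f : α → ℕ) (i : α) :
    ∑ m ∈ insert i s, f m ≤ f i + ∑ m ∈ s, f m := by
  by_cases h : i ∈ s
  · rw [Finset.insert_eq_self.2 h]; exact Nat.le_add_left _ _
  · rw [Finset.sum_insert h]

lemma issp9key (n : ℕ) (a1 a2 : Fin n → ℤ)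
    (hpos : ∀ i, 0 < a1 i) (hle : ∀ i, a1 i ≤ a2 i)
    (hsorted : ∀ i j : Fin n, i ≤ j → a2 i - a1 i ≤ a2 j - a1 j) :
    ∀ k : ℕ, ∀ x : Fin n → ℤ,
      (∀ i, x i = 0 ∨ (a1 i ≤ x i ∧ x i ≤ a2 i)) →
      issp9phi n a1 a2 x ≤ k →
      ∃ y : Fin n → ℤ,
        (∀ i, y i = 0 ∨ (a1 i ≤ y i ∧ y i ≤ a2 i)) ∧
        (∑ i, y i) = (∑ i, x i) ∧
        (∀ j : Fin n, (a1 j < y j ∧ y j < a2 j) → ∀ i : Fin n, j < i → y i = 0) := by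
  classical
  intro k
  induction k with
  | zero =>
    intro x hfeas hphi
    refine ⟨x, hfeas, rfl, ?_⟩
    intro j hj i _
    exfalso
    have hjmem : j ∈ Finset.univ.filter (fun j => a1 j < x j ∧ x j < a2 j) := by
      simp [hj.1, hj.2]
    have : n - j.val ≤ issp9phi n a1 a2 x := by
      unfold issp9phi
      exact Finset.single_le_sum (f := fun m : Fin n => n - m.val) (fun _ _ => Nat.zero_le _) hjmem
    have hjn := j.isLt
    omega
  | succ k ih =>
    intro x hfeas hphi
    by_cases hviol : ∃ j i : Fin n, (a1 j < x j ∧ x j < a2 j) ∧ j < i ∧ x i ≠ 0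
    · obtain ⟨j, i, hj, hji, hxi⟩ := hviol
      have hxi' : a1 i ≤ x i ∧ x i ≤ a2 i := (hfeas i).resolve_left hxi
      have hij : i ≠ j := fun h => absurd (h ▸ hji) (lt_irrefl _)
      have hlen : a2 j - a1 j ≤ a2 i - a1 i := hsorted j i hji.le
      -- choose the shift
      by_cases hc : a1 i ≤ x i - (a2 j - x j)
      case pos =>
        set u : ℤ := a2 j - x j with hu
        set y' : Fin n → ℤ := fun m => x m + (if m = j then u else 0) + (if m = i then -u else 0) with hy'
        have hy'j : y' j = a2 j := by simp [hy', if_neg (Ne.symm hij)]; omega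
        have hy'i : y' i = x i - u := by simp [hy', if_pos rfl, if_neg hij]; ring
        have hy'm : ∀ m, m ≠ i → m ≠ j → y' m = x m := by
          intro m hmi hmj; simp [hy', if_neg hmi, if_neg hmj]
        have hfeas' : ∀ m, y' m = 0 ∨ (a1 m ≤ y' m ∧ y' m ≤ a2 m) := by
          intro m
          by_cases hmi : m = i
          · subst hmi; right; rw [hy'i]; constructor
            · exact hc
            · have := hxi'.2; omega
          · by_cases hmj : m = j
            · subst hmj; right; rw [hy'j]; exact ⟨hle _, le_refl _⟩
            · rw [hy'm m hmi hmj]; exact hfeas m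
        have hsum : (∑ m, y' m) = ∑ m, x m := by
          simp only [hy']
          rw [Finset.sum_add_distrib, Finset.sum_add_distrib,
            Finset.sum_ite_eq' Finset.univ j (fun _ => u),
            Finset.sum_ite_eq' Finset.univ i (fun _ => -u)]
          simp
        -- potential decreases
        have hsub : (Finset.univ.filter (fun m => a1 m < y' m ∧ y' m < a2 m)) ⊆
            insert i ((Finset.univ.filter (fun m => a1 m < x m ∧ x m < a2 m)).erase j) := by
          intro m hm
          rw [Finset.mem_filter] at hm
          by_cases hmi : m = i
          · subst hmi; exact Finset.mem_insert_self _ _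
          · by_cases hmj : m = j
            · exfalso; subst hmj; rw [hy'j] at hm; exact absurd hm.2.2 (lt_irrefl _)
            · rw [hy'm m hmi hmj] at hm
              exact Finset.mem_insert_of_mem (Finset.mem_erase.2 ⟨hmj, Finset.mem_filter.2 ⟨Finset.mem_univ m, hm.2⟩⟩)
        have hjmem : j ∈ Finset.univ.filter (fun m => a1 m < x m ∧ x m < a2 m) := by
          simp [hj.1, hj.2]
        have hphi' : issp9phi n a1 a2 y' < issp9phi n a1 a2 x := by
          unfold issp9phi
          calc ∑ m ∈ Finset.univ.filter (fun m => a1 m < y' m ∧ y' m < a2 m), (n - m.val)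
              ≤ ∑ m ∈ insert i ((Finset.univ.filter (fun m => a1 m < x m ∧ x m < a2 m)).erase j), (n - m.val) :=
                Finset.sum_le_sum_of_subset hsub
            _ ≤ (n - i.val) + ∑ m ∈ (Finset.univ.filter (fun m => a1 m < x m ∧ x m < a2 m)).erase j, (n - m.val) :=
                issp9insert_le _ _ _
            _ < (n - j.val) + ∑ m ∈ (Finset.univ.filter (fun m => a1 m < x m ∧ x m < a2 m)).erase j, (n - m.val) := by
                have hin := i.isLt
                have hjlt : (j : ℕ) < (i : ℕ) := hji
                omega
            _ = ∑ m ∈ Finset.univ.filter (fun m => a1 m < x m ∧ x m < a2 m), (n - m.val) :=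
                Finset.add_sum_erase _ (fun m : Fin n => n - m.val) hjmem
        obtain ⟨y, hyfeas, hysum, hystruct⟩ := ih y' hfeas' (by omega)
        exact ⟨y, hyfeas, hysum.trans hsum, hystruct⟩
      case neg =>
        set d : ℤ := x j - a1 j with hd
        set y' : Fin n → ℤ := fun m => x m + (if m = j then -d else 0) + (if m = i then d else 0) with hy'
        have hy'j : y' j = a1 j := by simp [hy', if_neg (Ne.symm hij)]; omega
        have hy'i : y' i = x i + d := by simp [hy', if_pos rfl, if_neg hij]
        have hy'm : ∀ m, m ≠ i → m ≠ j → y' m = x m := by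
          intro m hmi hmj; simp [hy', if_neg hmi, if_neg hmj]
        have hup : x i + d ≤ a2 i := by
          push_neg at hc
          have h1 := hxi'.1
          have h2 := hj.1
          have h3 := hj.2
          omega
        have hfeas' : ∀ m, y' m = 0 ∨ (a1 m ≤ y' m ∧ y' m ≤ a2 m) := by
          intro m
          by_cases hmi : m = i
          · subst hmi; right; rw [hy'i]; constructor
            · have := hxi'.1; have := hj.1; omega
            · exact hup
          · by_cases hmj : m = j
            · subst hmj; right; rw [hy'j]; exact ⟨le_refl _, hle _⟩
            · rw [hy'm m hmi hmj]; exact hfeas m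
        have hsum : (∑ m, y' m) = ∑ m, x m := by
          simp only [hy']
          rw [Finset.sum_add_distrib, Finset.sum_add_distrib,
            Finset.sum_ite_eq' Finset.univ j (fun _ => -d),
            Finset.sum_ite_eq' Finset.univ i (fun _ => d)]
          simp
        have hsub : (Finset.univ.filter (fun m => a1 m < y' m ∧ y' m < a2 m)) ⊆
            insert i ((Finset.univ.filter (fun m => a1 m < x m ∧ x m < a2 m)).erase j) := by
          intro m hm
          rw [Finset.mem_filter] at hm
          by_cases hmi : m = i
          · subst hmi; exact Finset.mem_insert_self _ _
          · by_cases hmj : m = j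
            · exfalso; subst hmj; rw [hy'j] at hm; exact absurd hm.2.1 (lt_irrefl _)
            · rw [hy'm m hmi hmj] at hm
              exact Finset.mem_insert_of_mem (Finset.mem_erase.2 ⟨hmj, Finset.mem_filter.2 ⟨Finset.mem_univ m, hm.2⟩⟩)
        have hjmem : j ∈ Finset.univ.filter (fun m => a1 m < x m ∧ x m < a2 m) := by
          simp [hj.1, hj.2]
        have hphi' : issp9phi n a1 a2 y' < issp9phi n a1 a2 x := by
          unfold issp9phi
          calc ∑ m ∈ Finset.univ.filter (fun m => a1 m < y' m ∧ y' m < a2 m), (n - m.val)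
              ≤ ∑ m ∈ insert i ((Finset.univ.filter (fun m => a1 m < x m ∧ x m < a2 m)).erase j), (n - m.val) :=
                Finset.sum_le_sum_of_subset hsub
            _ ≤ (n - i.val) + ∑ m ∈ (Finset.univ.filter (fun m => a1 m < x m ∧ x m < a2 m)).erase j, (n - m.val) :=
                issp9insert_le _ _ _
            _ < (n - j.val) + ∑ m ∈ (Finset.univ.filter (fun m => a1 m < x m ∧ x m < a2 m)).erase j, (n - m.val) := by
                have hin := i.isLt
                have hjlt : (j : ℕ) < (i : ℕ) := hji
                omega
            _ = ∑ m ∈ Finset.univ.filter (fun m => a1 m < x m ∧ x m < a2 m), (n - m.val) :=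
                Finset.add_sum_erase _ (fun m : Fin n => n - m.val) hjmem
        obtain ⟨y, hyfeas, hysum, hystruct⟩ := ih y' hfeas' (by omega)
        exact ⟨y, hyfeas, hysum.trans hsum, hystruct⟩
    · refine ⟨x, hfeas, rfl, ?_⟩
      intro j hj i hji
      by_contra hne
      exact hviol ⟨j, i, hj, hji, hne⟩

/-- If the intervals are sorted by nondecreasing length, then the ISSP has an
optimal solution with at most one midrange index `j`, and all later variables
are zero (no left or right anchored interval follows the midrange interval). -/
theorem stmt9 (n : ℕ) (a1 a2 : Fin n → ℤ) (T : ℤ)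
    (hpos : ∀ i, 0 < a1 i) (hle : ∀ i, a1 i ≤ a2 i) (hT : ∀ i, a2 i < T)
    (hTpos : 0 < T)
    (hsorted : ∀ i j : Fin n, i ≤ j → a2 i - a1 i ≤ a2 j - a1 j) :
    ∃ x : Fin n → ℤ,
      ((∀ i, x i = 0 ∨ (a1 i ≤ x i ∧ x i ≤ a2 i)) ∧ (∑ i, x i) ≤ T) ∧
      (∀ x' : Fin n → ℤ,
        (∀ i, x' i = 0 ∨ (a1 i ≤ x' i ∧ x' i ≤ a2 i)) → (∑ i, x' i) ≤ T →
        (∑ i, x' i) ≤ ∑ i, x i) ∧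
      (∀ i j : Fin n,
        (a1 i < x i ∧ x i < a2 i) → (a1 j < x j ∧ x j < a2 j) → i = j) ∧
      (∀ j : Fin n, (a1 j < x j ∧ x j < a2 j) → ∀ i : Fin n, j < i → x i = 0) := by
  classical
  set P : ℤ → Prop := fun s => ∃ x : Fin n → ℤ,
    ((∀ i, x i = 0 ∨ (a1 i ≤ x i ∧ x i ≤ a2 i)) ∧ (∑ i, x i) ≤ T) ∧ (∑ i, x i) = s with hP
  have hbdd : ∃ b : ℤ, ∀ z, P z → z ≤ b := ⟨T, fun z ⟨x, hx, hxs⟩ => hxs ▸ hx.2⟩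
  have hinh : ∃ z, P z := ⟨0, (fun _ => 0), ⟨fun i => Or.inl rfl, by simp; omega⟩, by simp⟩
  obtain ⟨S, ⟨x0, ⟨hx0feas, hx0T⟩, hx0S⟩, hSmax⟩ := Int.exists_greatest_of_bdd hbdd hinh
  obtain ⟨y, hyfeas, hysum, hystruct⟩ :=
    issp9key n a1 a2 hpos hle hsorted (issp9phi n a1 a2 x0) x0 hx0feas (le_refl _)
  have hysumS : (∑ i, y i) = S := hysum.trans hx0S
  refine ⟨y, ⟨hyfeas, hysumS ▸ (hx0S ▸ hx0T)⟩, ?_, ?_, hystruct⟩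
  · intro x' hx'feas hx'T
    have := hSmax (∑ i, x' i) ⟨x', ⟨hx'feas, hx'T⟩, rfl⟩
    omega
  · intro i j hi hj
    rcases lt_trichotomy i j with h | h | h
    · exfalso
      have := hystruct i hi j h
      have := hpos j
      omega
    · exact h
    · exfalso
      have := hystruct j hj i h
      have := hpos i
      omega
end

section
/- Exchange lemma for interval pairs: let j < k with a_{j,2} − a_{j,1} ≤ a_{k,2} − a_{k,1}, and let x be a feasible ISSP solution with a_{j,1} < x_j < a_{j,2} and x_k = a_{k,2}. Then the modified solution x̃ with x̃_j = a_{j,2}, x̃_k = a_{k,2} − a_{j,2} + x_j, and x̃ᵢ = xᵢ otherwise, is also feasible (in particular a_{k,1} ≤ x̃_k ≤ a_{k,2}) and has the same objective value Σᵢ x̃ᵢ = Σᵢ xᵢ. -/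
/-- Exchange lemma: if `j < k`, the `j`-th interval is not longer than the `k`-th,
`x` is feasible with `a_{j,1} < x_j < a_{j,2}` and `x_k = a_{k,2}`, then the
solution `x̃` with `x̃_j = a_{j,2}`, `x̃_k = a_{k,2} - a_{j,2} + x_j` and
`x̃_i = x_i` otherwise is feasible and has the same objective value. -/
theorem stmt10 (n : ℕ) (a1 a2 : Fin n → ℤ) (T : ℤ)
    (hpos : ∀ i, 0 < a1 i) (hle : ∀ i, a1 i ≤ a2 i)
    (j k : Fin n) (hjk : j < k)
    (hlen : a2 j - a1 j ≤ a2 k - a1 k)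
    (x : Fin n → ℤ)
    (hfeas : ∀ i, x i = 0 ∨ (a1 i ≤ x i ∧ x i ≤ a2 i))
    (hsum : (∑ i, x i) ≤ T)
    (hj : a1 j < x j ∧ x j < a2 j) (hk : x k = a2 k) :
    let xt : Fin n → ℤ := fun i =>
      if i = j then a2 j else if i = k then a2 k - a2 j + x j else x i
    (∀ i, xt i = 0 ∨ (a1 i ≤ xt i ∧ xt i ≤ a2 i)) ∧
    (a1 k ≤ xt k ∧ xt k ≤ a2 k) ∧
    (∑ i, xt i) = (∑ i, x i) ∧ (∑ i, xt i) ≤ T := by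
  intro xt
  have hne : j ≠ k := ne_of_lt hjk
  have hxtk : xt k = a2 k - a2 j + x j := by simp [xt, hne.symm]
  have hxtj : xt j = a2 j := by simp [xt]
  have hkb : a1 k ≤ xt k ∧ xt k ≤ a2 k := by
    rw [hxtk]; constructor <;> linarith [hj.1, hj.2, hle j, hle k]
  have hfeas' : ∀ i, xt i = 0 ∨ (a1 i ≤ xt i ∧ xt i ≤ a2 i) := by
    intro i
    by_cases hij : i = j
    · subst hij; rw [hxtj]; exact Or.inr ⟨hle _, le_refl _⟩
    · by_cases hik : i = k
      · subst hik; exact Or.inr hkb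
      · have : xt i = x i := by simp [xt, hij, hik]
        rw [this]; exact hfeas i
  have hpt : ∀ i, xt i = x i + (if i = j then a2 j - x j else 0)
      + (if i = k then a2 k - a2 j + x j - x k else 0) := by
    intro i
    by_cases hij : i = j
    · subst hij; simp [xt, hne]
    · by_cases hik : i = k
      · subst hik; simp [xt, hne.symm]
      · simp [xt, hij, hik]
  have hsumeq : (∑ i, xt i) = ∑ i, x i := by
    simp only [hpt, Finset.sum_add_distrib, Finset.sum_ite_eq', Finset.mem_univ, if_true, hk]
    ring
  exact ⟨hfeas', hkb, hsumeq, hsumeq ▸ hsum⟩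
end

section
/- Let a finite index set be split into two halves Λ₁, Λ₂, and let Δ* = {Σ_{i∈S₁} bᵢ + Σ_{i∈S₂} cᵢ} be the corresponding set of subset sums, so that every δ ∈ Δ* decomposes as δ = δ₁ + δ₂ with δ₁ ∈ {0} ∪ Δ*_{Λ₁} and δ₂ ∈ {0} ∪ Δ*_{Λ₂}. Suppose δ ∈ Δ* satisfies T̃ − εT ≤ δ ≤ T̃. If Δ_{Λ₁} ⊆ Δ*_{Λ₁} and Δ_{Λ₂} ⊆ Δ*_{Λ₂} are ε-approximating in the sense of Lemma 5 (each element of Δ*_{Λⱼ} is sandwiched within εT by elements of Δ_{Λⱼ}, or approximated from below within [T̃−εT, T̃]), then there exist u₁ ∈ {0} ∪ Δ_{Λ₁} and u₂ ∈ {0} ∪ Δ_{Λ₂} with T̃ − εT ≤ u₁ + u₂ ≤ T̃. -/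
/-- Divide step: if `δ ∈ [T̃ - εT, T̃]` decomposes as `δ = δ₁ + δ₂` with
`δ₁ ∈ {0} ∪ Δ*₁` and `δ₂ ∈ {0} ∪ Δ*₂`, and `Δ₁, Δ₂` are ε-approximating for
`Δ*₁, Δ*₂` respectively, then there are `u₁ ∈ {0} ∪ Δ₁` and `u₂ ∈ {0} ∪ Δ₂`
with `T̃ - εT ≤ u₁ + u₂ ≤ T̃`. -/
theorem stmt12 (T ε Ttilde : ℝ) (hT : 0 < T) (hε0 : 0 < ε) (hε1 : ε < 1)
    (hTt0 : 0 < Ttilde) (hTtT : Ttilde ≤ T)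
    (Δstar₁ Δstar₂ Δ₁ Δ₂ : Set ℝ)
    (happrox₁ : ∀ d ∈ Δstar₁,
      (∃ dl ∈ Δ₁, ∃ du ∈ Δ₁, dl ≤ d ∧ d ≤ du ∧ du - dl ≤ ε * T) ∨
      (∃ dl ∈ Δ₁, Ttilde - ε * T ≤ dl ∧ dl ≤ d ∧ d ≤ Ttilde))
    (happrox₂ : ∀ d ∈ Δstar₂,
      (∃ dl ∈ Δ₂, ∃ du ∈ Δ₂, dl ≤ d ∧ d ≤ du ∧ du - dl ≤ ε * T) ∨
      (∃ dl ∈ Δ₂, Ttilde - ε * T ≤ dl ∧ dl ≤ d ∧ d ≤ Ttilde))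
    (δ δ₁ δ₂ : ℝ)
    (hδ : Ttilde - ε * T ≤ δ ∧ δ ≤ Ttilde)
    (hdecomp : δ = δ₁ + δ₂)
    (h₁ : δ₁ ∈ ({0} : Set ℝ) ∪ Δstar₁) (h₂ : δ₂ ∈ ({0} : Set ℝ) ∪ Δstar₂) :
    ∃ u₁ ∈ ({0} : Set ℝ) ∪ Δ₁, ∃ u₂ ∈ ({0} : Set ℝ) ∪ Δ₂,
      Ttilde - ε * T ≤ u₁ + u₂ ∧ u₁ + u₂ ≤ Ttilde := by
  obtain ⟨hlo, hhi⟩ := hδ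
  rcases h₁ with h₁ | h₁ <;> rcases h₂ with h₂ | h₂
  · simp only [Set.mem_singleton_iff] at h₁ h₂
    exact ⟨0, Or.inl rfl, 0, Or.inl rfl, by subst h₁ h₂; constructor <;> linarith⟩
  · simp only [Set.mem_singleton_iff] at h₁
    rcases happrox₂ δ₂ h₂ with ⟨dl, hdl, du, hdu, hl, hu, hgap⟩ | ⟨dl, hdl, ha, hb, hc⟩
    · by_cases hcase : du ≤ Ttilde
      · exact ⟨0, Or.inl rfl, du, Or.inr hdu, by constructor <;> linarith⟩
      · exact ⟨0, Or.inl rfl, dl, Or.inr hdl, by constructor <;> linarith⟩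
    · exact ⟨0, Or.inl rfl, dl, Or.inr hdl, by constructor <;> linarith⟩
  · simp only [Set.mem_singleton_iff] at h₂
    rcases happrox₁ δ₁ h₁ with ⟨dl, hdl, du, hdu, hl, hu, hgap⟩ | ⟨dl, hdl, ha, hb, hc⟩
    · by_cases hcase : du ≤ Ttilde
      · exact ⟨du, Or.inr hdu, 0, Or.inl rfl, by constructor <;> linarith⟩
      · exact ⟨dl, Or.inr hdl, 0, Or.inl rfl, by constructor <;> linarith⟩
    · exact ⟨dl, Or.inr hdl, 0, Or.inl rfl, by constructor <;> linarith⟩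
  · rcases happrox₁ δ₁ h₁ with ⟨dl₁, hdl₁, du₁, hdu₁, hl₁, hu₁, hgap₁⟩ | ⟨dl, hdl, ha, hb, hc⟩
    · rcases happrox₂ δ₂ h₂ with ⟨dl₂, hdl₂, du₂, hdu₂, hl₂, hu₂, hgap₂⟩ | ⟨dl, hdl, ha, hb, hc⟩
      · by_cases hA : du₁ + du₂ ≤ Ttilde
        · exact ⟨du₁, Or.inr hdu₁, du₂, Or.inr hdu₂, by constructor <;> linarith⟩
        · by_cases hB : Ttilde - ε * T ≤ dl₁ + dl₂
          · exact ⟨dl₁, Or.inr hdl₁, dl₂, Or.inr hdl₂, by constructor <;> linarith⟩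
          · exact ⟨du₁, Or.inr hdu₁, dl₂, Or.inr hdl₂, by constructor <;> linarith⟩
      · exact ⟨0, Or.inl rfl, dl, Or.inr hdl, by constructor <;> linarith⟩
    · exact ⟨dl, Or.inr hdl, 0, Or.inl rfl, by constructor <;> linarith⟩
end

section
/- For the SSP instance with aᵢ = 2^{k+n+1} + 2^{k+i} + 1 where k = ⌊log₂ n⌋, all 2ⁿ subset sums of {a₁,…,aₙ} are pairwise distinct. -/
/-!
Write `M = 2^(k+n+1)`. The subset sum over `S` is `#S * M + (∑_{i ∈ S} 2^(k+i) + #S)`, and the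
second summand is below `M`: the powers `2^(k+i)`, `1 ≤ i ≤ n`, add up to `M - 2^(k+1)`, while
`#S ≤ n < 2^(k+1)` by the choice of `k`. So a subset sum determines `#S` as its quotient by `M`,
then `∑_{i ∈ S} 2^i`, and this binary expansion determines `S`.
-/

open Finset

lemma Nat.eq_and_eq_of_add_mul_eq {M r r' c c' : ℕ} (hr : r < M) (hr' : r' < M)
    (h : r + M * c = r' + M * c') : r = r' ∧ c = c' := by
  have hM : 0 < M := by omega
  obtain ⟨hc, hr⟩ := (Nat.div_mod_unique hM).2 ⟨h, hr⟩
  obtain ⟨hc', hr'⟩ := (Nat.div_mod_unique hM).2 ⟨rfl, hr'⟩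
  exact ⟨hr.symm.trans hr', hc.symm.trans hc'⟩

lemma sum_Icc_two_pow_add_two_pow (k n : ℕ) :
    ∑ i ∈ Icc 1 n, 2 ^ (k + i) + 2 ^ (k + 1) = 2 ^ (k + n + 1) := by
  induction n with
  | zero => simp
  | succ m ih =>
    rw [sum_Icc_succ_top (by omega), add_right_comm, ih, ← add_assoc, pow_succ _ (k + m + 1)]
    ring

lemma sum_two_pow_add_card_lt {k n : ℕ} (hn : n < 2 ^ (k + 1)) {T : Finset ℕ}
    (hT : T ⊆ Icc 1 n) : ∑ i ∈ T, 2 ^ (k + i) + #T < 2 ^ (k + n + 1) := by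
  have hsum : ∑ i ∈ T, 2 ^ (k + i) ≤ ∑ i ∈ Icc 1 n, 2 ^ (k + i) := sum_le_sum_of_subset hT
  have hcard : #T ≤ n := (card_le_card hT).trans (by simp)
  have := sum_Icc_two_pow_add_two_pow k n
  omega

lemma sum_two_pow_add_injective (k : ℕ) :
    Function.Injective (fun T : Finset ℕ ↦ ∑ i ∈ T, 2 ^ (k + i)) := by
  intro S S' h
  simp only [pow_add, ← mul_sum] at h
  exact geomSum_injective le_rfl (Nat.eq_of_mul_eq_mul_left (by positivity) h)

theorem stmt17_general (n : ℕ) :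
    let k := Nat.log 2 n
    let a : ℕ → ℕ := fun i => 2 ^ (k + n + 1) + 2 ^ (k + i) + 1
    ∀ S ⊆ Finset.Icc 1 n, ∀ S' ⊆ Finset.Icc 1 n,
      (∑ i ∈ S, a i) = (∑ i ∈ S', a i) → S = S' := by
  intro k a S hS S' hS' h
  have hsplit (T : Finset ℕ) :
      ∑ i ∈ T, a i = (∑ i ∈ T, 2 ^ (k + i) + #T) + 2 ^ (k + n + 1) * #T := by
    simp only [a, sum_add_distrib, sum_const, smul_eq_mul, mul_one]
    ring
  have hn : n < 2 ^ (k + 1) := Nat.lt_pow_succ_log_self one_lt_two n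
  obtain ⟨hlow, hcard⟩ := Nat.eq_and_eq_of_add_mul_eq (sum_two_pow_add_card_lt hn hS)
    (sum_two_pow_add_card_lt hn hS') (by rwa [← hsplit, ← hsplit])
  exact sum_two_pow_add_injective k (by simpa [hcard] using hlow)

/-- For the SSP instance `aᵢ = 2^(k+n+1) + 2^(k+i) + 1` with `k = ⌊log₂ n⌋`,
all `2ⁿ` subset sums of `{a₁, …, aₙ}` are pairwise distinct. -/
theorem stmt17 (n : ℕ) (hn : 1 ≤ n) :
    let k := Nat.log 2 n
    let a : ℕ → ℕ := fun i => 2 ^ (k + n + 1) + 2 ^ (k + i) + 1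
    ∀ S ⊆ Finset.Icc 1 n, ∀ S' ⊆ Finset.Icc 1 n,
      (∑ i ∈ S, a i) = (∑ i ∈ S', a i) → S = S' :=
  stmt17_general n
end
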